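/- Let K_1, …, K_r ⊆ ℝⁿ be closed convex sets with x̄ ∈ K := ∩_{l=1}^r K_l, and suppose that whenever v_l ∈ N_{K_l}(x̄) satisfy Σ_{l=1}^r v_l = 0, then all v_l = 0. Then there exists δ > 0 such that for every x ∈ K ∩ B(x̄,δ), the implication also holds at x: if v_l ∈ N_{K_l}(x) and Σ_{l=1}^r v_l = 0, then v_l = 0 for all l. -/

import Mathlib

/-!
The set of points where the qualification fails is closed: after normalizing, the offending
tuples of normal vectors lie on the unit sphere, which is compact, and the graph of the normal
cone map `x ↦ N_C(x)` is closed. Since `x̄` lies outside this closed set, so does a ball around it.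
-/

open RealInnerProductSpace

/-- The normal cone of a convex set `C` at `x`. -/
def normalCone {n : ℕ} (C : Set (EuclideanSpace ℝ (Fin n))) (x : EuclideanSpace ℝ (Fin n)) :
    Set (EuclideanSpace ℝ (Fin n)) :=
  {v | ∀ y ∈ C, ⟪v, y - x⟫ ≤ 0}

open Metric

variable {n : ℕ}

theorem smul_mem_normalCone {C : Set (EuclideanSpace ℝ (Fin n))}
    {x v : EuclideanSpace ℝ (Fin n)} {c : ℝ} (hc : 0 ≤ c) (hv : v ∈ normalCone C x) :
    c • v ∈ normalCone C x := fun y hy => by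
  rw [real_inner_smul_left]
  exact mul_nonpos_of_nonneg_of_nonpos hc (hv y hy)

theorem isClosed_setOf_mem_normalCone (C : Set (EuclideanSpace ℝ (Fin n))) :
    IsClosed {p : EuclideanSpace ℝ (Fin n) × EuclideanSpace ℝ (Fin n) |
      p.2 ∈ normalCone C p.1} := by
  have hinter : {p : EuclideanSpace ℝ (Fin n) × EuclideanSpace ℝ (Fin n) |
      p.2 ∈ normalCone C p.1} = ⋂ y ∈ C, {p | ⟪p.2, y - p.1⟫ ≤ 0} := by
    ext p
    simp [normalCone]
  rw [hinter]
  exact isClosed_biInter fun y _ => isClosed_le (by fun_prop) continuous_const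

section Qualification

variable {ι : Type*} [Fintype ι]

def normalQualificationFailureSet (K : ι → Set (EuclideanSpace ℝ (Fin n))) :
    Set (EuclideanSpace ℝ (Fin n)) :=
  {x | ∃ v : ι → EuclideanSpace ℝ (Fin n), v ≠ 0 ∧ (∀ l, v l ∈ normalCone (K l) x) ∧ ∑ l, v l = 0}

theorem normalQualificationFailureSet_eq_image (K : ι → Set (EuclideanSpace ℝ (Fin n))) :
    normalQualificationFailureSet K =
      Prod.fst '' {p : EuclideanSpace ℝ (Fin n) × sphere (0 : ι → EuclideanSpace ℝ (Fin n)) 1 |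
        (∀ l, (p.2 : ι → EuclideanSpace ℝ (Fin n)) l ∈ normalCone (K l) p.1) ∧
          ∑ l, (p.2 : ι → EuclideanSpace ℝ (Fin n)) l = 0} := by
  ext x
  constructor
  · rintro ⟨v, hv0, hvN, hvsum⟩
    have hnorm : ‖v‖⁻¹ • v ∈ sphere (0 : ι → EuclideanSpace ℝ (Fin n)) 1 := by
      rw [mem_sphere_zero_iff_norm, norm_smul, norm_inv, norm_norm,
        inv_mul_cancel₀ (norm_ne_zero_iff.mpr hv0)]
    refine ⟨(x, ⟨_, hnorm⟩), ⟨fun l => smul_mem_normalCone (by positivity) (hvN l), ?_⟩, rfl⟩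
    simp only [Pi.smul_apply, ← Finset.smul_sum, hvsum, smul_zero]
  · rintro ⟨⟨x, v, hv⟩, ⟨hvN, hvsum⟩, rfl⟩
    exact ⟨v, ne_zero_of_mem_unit_sphere ⟨v, hv⟩, hvN, hvsum⟩

theorem isClosed_normalQualificationFailureSet (K : ι → Set (EuclideanSpace ℝ (Fin n))) :
    IsClosed (normalQualificationFailureSet K) := by
  rw [normalQualificationFailureSet_eq_image]
  let S := sphere (0 : ι → EuclideanSpace ℝ (Fin n)) 1
  have : CompactSpace S := isCompact_iff_compactSpace.mp (isCompact_sphere _ _)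
  have hcomp (l : ι) :
      Continuous fun p : EuclideanSpace ℝ (Fin n) × S => (p.2 : ι → EuclideanSpace ℝ (Fin n)) l :=
    (continuous_apply l).comp (continuous_subtype_val.comp continuous_snd)
  have hnormal : IsClosed {p : EuclideanSpace ℝ (Fin n) × S |
      ∀ l, (p.2 : ι → EuclideanSpace ℝ (Fin n)) l ∈ normalCone (K l) p.1} := by
    rw [Set.ofPred_forall]
    exact isClosed_iInter fun l =>
      (isClosed_setOf_mem_normalCone (K l)).preimage (continuous_fst.prodMk (hcomp l))
  have hsum : IsClosed {p : EuclideanSpace ℝ (Fin n) × S |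
      ∑ l, (p.2 : ι → EuclideanSpace ℝ (Fin n)) l = 0} :=
    isClosed_eq (continuous_finsetSum _ fun l _ => hcomp l) continuous_const
  exact isClosedMap_fst_of_compactSpace _ (hnormal.inter hsum)

end Qualification

theorem CQ_local_general
    {n r : ℕ} (K : Fin r → Set (EuclideanSpace ℝ (Fin n)))
    (xbar : EuclideanSpace ℝ (Fin n))
    (hCQ : ∀ v : Fin r → EuclideanSpace ℝ (Fin n),
      (∀ l, v l ∈ normalCone (K l) xbar) → ∑ l, v l = 0 → ∀ l, v l = 0) :
    ∃ δ > (0:ℝ), ∀ x ∈ (⋂ l, K l) ∩ Metric.closedBall xbar δ,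
      ∀ v : Fin r → EuclideanSpace ℝ (Fin n),
        (∀ l, v l ∈ normalCone (K l) x) → ∑ l, v l = 0 → ∀ l, v l = 0 := by
  have hxbar : xbar ∉ normalQualificationFailureSet K := fun ⟨v, hv0, hvN, hvsum⟩ =>
    hv0 (funext (hCQ v hvN hvsum))
  obtain ⟨ε, hε, hball⟩ := isOpen_iff.mp (isClosed_normalQualificationFailureSet K).isOpen_compl
    xbar hxbar
  refine ⟨ε / 2, half_pos hε, fun x hx v hvN hvsum => ?_⟩
  have hxgood : x ∉ normalQualificationFailureSet K :=
    hball (closedBall_subset_ball (half_lt_self hε) hx.2)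
  by_contra hv0
  exact hxgood ⟨v, fun h => hv0 (congrFun h), hvN, hvsum⟩

/-- The constraint qualification at `x̄` propagates to all nearby points of the
intersection. -/
theorem CQ_local
    {n r : ℕ} (K : Fin r → Set (EuclideanSpace ℝ (Fin n)))
    (hclosed : ∀ l, IsClosed (K l)) (hconv : ∀ l, Convex ℝ (K l))
    (xbar : EuclideanSpace ℝ (Fin n)) (hxbar : xbar ∈ ⋂ l, K l)
    (hCQ : ∀ v : Fin r → EuclideanSpace ℝ (Fin n),
      (∀ l, v l ∈ normalCone (K l) xbar) → ∑ l, v l = 0 → ∀ l, v l = 0) :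
    ∃ δ > (0:ℝ), ∀ x ∈ (⋂ l, K l) ∩ Metric.closedBall xbar δ,
      ∀ v : Fin r → EuclideanSpace ℝ (Fin n),
        (∀ l, v l ∈ normalCone (K l) x) → ∑ l, v l = 0 → ∀ l, v l = 0 :=
  CQ_local_general K xbar hCQ
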